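/- Let f : S → S be a bijection of a set S and U ⊆ S with f(U) ⊊ U (proper inclusion). Let j = U ∖ f(U) (the 'juncture region'). Then the sets {fⁿ(j)}_{n∈ℤ} are pairwise disjoint, and ∪_{n∈ℤ} fⁿ(j) = 𝒰 ∖ K where 𝒰 = ∪_{n∈ℤ} fⁿ(U) and K = ∩_{n≥0} fⁿ(U). -/

import Mathlib

/-- If `f(U) ⊊ U` and `j = U ∖ f(U)`, then the translates `{fⁿ(j)}` are pairwise
disjoint and `⋃ₙ fⁿ(j) = 𝒰 ∖ K` where `𝒰 = ⋃_{n∈ℤ} fⁿ(U)` and `K = ⋂_{n≥0} fⁿ(U)`. -/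
theorem juncture_translates {S : Type*} (f : Equiv.Perm S) (U : Set S)
    (hU : f '' U ⊂ U) :
    (∀ m n : ℤ, m ≠ n → Disjoint ((f ^ m) '' (U \ f '' U)) ((f ^ n) '' (U \ f '' U))) ∧
    (⋃ n : ℤ, (f ^ n) '' (U \ f '' U)) =
      (⋃ n : ℤ, (f ^ n) '' U) \ (⋂ n : ℕ, (f ^ (n : ℤ)) '' U) := by
  have hsub : f '' U ⊆ U := hU.subset
  set A : ℤ → Set S := fun n => (f ^ n) '' U with hA
  have hstep : ∀ n : ℤ, A (n + 1) = (f ^ n) '' (f '' U) := by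
    intro n
    simp only [hA]
    rw [zpow_add_one, Equiv.Perm.coe_mul, Set.image_comp]
  have hanti : Antitone A := by
    apply antitone_int_of_succ_le
    intro n
    rw [hstep]
    exact Set.image_mono hsub
  have hj : ∀ n : ℤ, (f ^ n) '' (U \ f '' U) = A n \ A (n + 1) := by
    intro n
    rw [Set.image_diff (Equiv.injective _), hstep]
  have key : ∀ m n : ℤ, m < n →
      Disjoint ((f ^ m) '' (U \ f '' U)) ((f ^ n) '' (U \ f '' U)) := by
    intro m n hmn
    rw [hj, hj, Set.disjoint_left]
    rintro x ⟨_, hx2⟩ ⟨hx3, _⟩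
    exact hx2 (hanti (by omega : m + 1 ≤ n) hx3)
  constructor
  · intro m n hmn
    rcases hmn.lt_or_gt with h | h
    · exact key m n h
    · exact (key n m h).symm
  · ext x
    simp only [Set.mem_iUnion, Set.mem_diff, Set.mem_iInter]
    constructor
    · rintro ⟨n, hn⟩
      rw [hj] at hn
      refine ⟨⟨n, hn.1⟩, ?_⟩
      intro hK
      have h1 : x ∈ A ((n + 1).toNat : ℤ) := hK _
      exact hn.2 (hanti (Int.self_le_toNat _) h1)
    · rintro ⟨⟨m, hm⟩, hK⟩
      push_neg at hK
      obtain ⟨k, hk⟩ := hK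
      have hbdd : ∃ b : ℤ, ∀ z : ℤ, x ∈ A z → z ≤ b := by
        refine ⟨(k : ℤ) - 1, fun z hz => ?_⟩
        by_contra h
        exact hk (hanti (by omega : (k : ℤ) ≤ z) hz)
      obtain ⟨n, hn, hmax⟩ := Int.exists_greatest_of_bdd hbdd ⟨m, hm⟩
      refine ⟨n, ?_⟩
      rw [hj]
      exact ⟨hn, fun h => by have := hmax _ h; omega⟩
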